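/- arXiv:0908.2537 — 3 statements merged into one kernel-verified Lean document; each statement's English description precedes it below -/
import Mathlib

section
/- Let A1, A2, A3 be a partition of {1,...,n} into three nonempty parts and μ1, μ2, μ3 positive integers with μ1+μ2+μ3 = k. Define P1 = {x ∈ Δ(k,n) : Σ_{i∈A3} x_i ≤ μ3 and Σ_{i∈A2} x_i ≥ μ2}, P2 = {x ∈ Δ(k,n) : Σ_{i∈A1} x_i ≤ μ1 and Σ_{i∈A3} x_i ≥ μ3}, and P3 = {x ∈ Δ(k,n) : Σ_{i∈A2} x_i ≤ μ2 and Σ_{i∈A1} x_i ≥ μ1}. Then Δ(k,n) = P1 ∪ P2 ∪ P3. -/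
/-! The block sums `sⱼ = ∑ i ∈ Aⱼ, x i` of a point of `Δ(k,n)` add up to `μ₁ + μ₂ + μ₃`, so the
excesses `sⱼ - μⱼ` add up to zero; among three numbers with sum zero, some cyclically
consecutive pair consists of a non-positive one followed by a non-negative one. -/

def hypersimplex (k n : ℕ) : Set (Fin n → ℝ) :=
  {x | (∀ i, 0 ≤ x i ∧ x i ≤ 1) ∧ ∑ i, x i = k}

open Finset

theorem le_and_le_cyclic_of_add_add_eq {α : Type*} [AddCommMonoid α] [LinearOrder α]
    [IsOrderedCancelAddMonoid α] {a₁ a₂ a₃ m₁ m₂ m₃ : α} (h : a₁ + a₂ + a₃ = m₁ + m₂ + m₃) :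
    (a₃ ≤ m₃ ∧ m₂ ≤ a₂) ∨ (a₁ ≤ m₁ ∧ m₃ ≤ a₃) ∨ (a₂ ≤ m₂ ∧ m₁ ≤ a₁) := by
  rcases le_or_gt a₃ m₃ with h₃ | h₃
  · rcases le_or_gt m₂ a₂ with h₂ | h₂
    · exact Or.inl ⟨h₃, h₂⟩
    · refine Or.inr (Or.inr ⟨h₂.le, le_of_not_gt fun h₁ => ?_⟩)
      exact h.not_lt (add_lt_add_of_lt_of_le (add_lt_add h₁ h₂) h₃)
  · rcases le_or_gt a₁ m₁ with h₁ | h₁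
    · exact Or.inr (Or.inl ⟨h₁, h₃.le⟩)
    · refine Or.inr (Or.inr ⟨le_of_not_gt fun h₂ => ?_, h₁.le⟩)
      exact h.not_gt (add_lt_add (add_lt_add h₁ h₂) h₃)

theorem Finset.sum_add_sum_add_sum_of_disjoint {ι M : Type*} [AddCommMonoid M] [DecidableEq ι]
    {s₁ s₂ s₃ : Finset ι} (h₁₂ : Disjoint s₁ s₂) (h₁₃ : Disjoint s₁ s₃) (h₂₃ : Disjoint s₂ s₃)
    (f : ι → M) : ∑ i ∈ s₁, f i + ∑ i ∈ s₂, f i + ∑ i ∈ s₃, f i = ∑ i ∈ s₁ ∪ s₂ ∪ s₃, f i := by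
  rw [sum_union (disjoint_union_left.mpr ⟨h₁₃, h₂₃⟩), sum_union h₁₂]

theorem stmt0_general (n k : ℕ) (A1 A2 A3 : Finset (Fin n))
    (h12 : Disjoint A1 A2) (h13 : Disjoint A1 A3) (h23 : Disjoint A2 A3)
    (hcov : A1 ∪ A2 ∪ A3 = Finset.univ)
    (μ1 μ2 μ3 : ℕ)
    (hsum : μ1 + μ2 + μ3 = k) :
    hypersimplex k n =
      {x ∈ hypersimplex k n | ∑ i ∈ A3, x i ≤ (μ3 : ℝ) ∧ (μ2 : ℝ) ≤ ∑ i ∈ A2, x i} ∪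
      {x ∈ hypersimplex k n | ∑ i ∈ A1, x i ≤ (μ1 : ℝ) ∧ (μ3 : ℝ) ≤ ∑ i ∈ A3, x i} ∪
      {x ∈ hypersimplex k n | ∑ i ∈ A2, x i ≤ (μ2 : ℝ) ∧ (μ1 : ℝ) ≤ ∑ i ∈ A1, x i} := by
  refine Set.Subset.antisymm (fun x hx => ?_)
    (Set.union_subset (Set.union_subset (Set.sep_subset _ _) (Set.sep_subset _ _))
      (Set.sep_subset _ _))
  have hblocks : ∑ i ∈ A1, x i + ∑ i ∈ A2, x i + ∑ i ∈ A3, x i = μ1 + μ2 + μ3 := by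
    rw [sum_add_sum_add_sum_of_disjoint h12 h13 h23, hcov, hx.2, ← hsum, Nat.cast_add,
      Nat.cast_add]
  rcases le_and_le_cyclic_of_add_add_eq hblocks with h | h | h
  · exact Or.inl (Or.inl ⟨hx, h⟩)
  · exact Or.inl (Or.inr ⟨hx, h⟩)
  · exact Or.inr ⟨hx, h⟩

theorem stmt0 (n k : ℕ) (A1 A2 A3 : Finset (Fin n))
    (h1 : A1.Nonempty) (h2 : A2.Nonempty) (h3 : A3.Nonempty)
    (h12 : Disjoint A1 A2) (h13 : Disjoint A1 A3) (h23 : Disjoint A2 A3)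
    (hcov : A1 ∪ A2 ∪ A3 = Finset.univ)
    (μ1 μ2 μ3 : ℕ) (hμ1 : 0 < μ1) (hμ2 : 0 < μ2) (hμ3 : 0 < μ3)
    (hsum : μ1 + μ2 + μ3 = k) :
    hypersimplex k n =
      {x ∈ hypersimplex k n | ∑ i ∈ A3, x i ≤ (μ3 : ℝ) ∧ (μ2 : ℝ) ≤ ∑ i ∈ A2, x i} ∪
      {x ∈ hypersimplex k n | ∑ i ∈ A1, x i ≤ (μ1 : ℝ) ∧ (μ3 : ℝ) ≤ ∑ i ∈ A3, x i} ∪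
      {x ∈ hypersimplex k n | ∑ i ∈ A2, x i ≤ (μ2 : ℝ) ∧ (μ1 : ℝ) ≤ ∑ i ∈ A1, x i} :=
  stmt0_general n k A1 A2 A3 h12 h13 h23 hcov μ1 μ2 μ3 hsum
end

section
/- Let J be a finite index set, and for each j ∈ J let A_j be a finite point configuration in ℝ^{k−1} with A_j contained in an affine subspace U_j of dimension μ_j − 1, the U_j pairwise disjoint, and Σ_{j∈J} μ_j ≤ k. Suppose each A_j is in general position within U_j and the family {A_j} is in relative general position. Then a k-element subset B of ∪_j A_j is affinely independent if and only if |B ∩ A_j| ≤ μ_j for all j ∈ J. -/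
/-- A finite set of points is affinely independent. -/
def affIndep {m : ℕ} (s : Finset (Fin m → ℝ)) : Prop :=
  AffineIndependent ℝ (fun x : s => (x : Fin m → ℝ))

open Module

theorem AffineIndependent.card_le_finrank_direction_succ {k V P ι : Type*} [DivisionRing k]
    [AddCommGroup V] [Module k V] [AddTorsor V P] [Fintype ι] {p : ι → P}
    (hp : AffineIndependent k p) {S : AffineSubspace k P} [FiniteDimensional k S.direction]
    (hpS : ∀ i, p i ∈ S) :
    Fintype.card ι ≤ finrank k S.direction + 1 := by
  have hspan : vectorSpan k (Set.range p) ≤ S.direction :=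
    vectorSpan_mono k (Set.range_subset_iff.2 hpS) |>.trans_eq S.direction_eq_vectorSpan.symm
  have := Submodule.finrank_mono hspan
  have := hp.card_le_finrank_succ
  omega

namespace affIndep

variable {m : ℕ} {s t : Finset (Fin m → ℝ)}

theorem mono (ht : affIndep t) (hst : s ⊆ t) : affIndep s :=
  AffineIndependent.mono ht (Finset.coe_subset.2 hst)

theorem card_le_finrank_direction_succ (hs : affIndep s) {S : AffineSubspace ℝ (Fin m → ℝ)}
    (hsS : (s : Set (Fin m → ℝ)) ⊆ S) : s.card ≤ finrank ℝ S.direction + 1 := by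
  simpa using AffineIndependent.card_le_finrank_direction_succ hs fun x => hsS x.2

end affIndep

theorem stmt13_general (k : ℕ) {J : Type}
    (A : J → Finset (Fin (k - 1) → ℝ)) (μ : J → ℕ) (hμ : ∀ j, 1 ≤ μ j)
    (U : J → AffineSubspace ℝ (Fin (k - 1) → ℝ))
    (hdim : ∀ j, Module.finrank ℝ (U j).direction = μ j - 1)
    (hAU : ∀ j, (A j : Set (Fin (k - 1) → ℝ)) ⊆ U j)
    (hgen : ∀ j, ∀ s ⊆ A j, s.card ≤ μ j → affIndep s)
    (hrel : ∀ s : Finset (Fin (k - 1) → ℝ), (↑s ⊆ ⋃ j, (A j : Set (Fin (k - 1) → ℝ))) →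
      s.card ≤ k → ¬ affIndep s → ∃ j, ¬ affIndep (s ∩ A j))
    (B : Finset (Fin (k - 1) → ℝ))
    (hB : ↑B ⊆ ⋃ j, (A j : Set (Fin (k - 1) → ℝ))) (hBk : B.card = k) :
    affIndep B ↔ ∀ j, (B ∩ A j).card ≤ μ j := by
  constructor
  · intro hInd j
    have hBA_sub : ((B ∩ A j : Finset _) : Set (Fin (k - 1) → ℝ)) ⊆ U j :=
      fun x hx => hAU j (Finset.mem_inter.1 hx).2
    have := (hInd.mono Finset.inter_subset_left).card_le_finrank_direction_succ hBA_sub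
    have := hdim j
    have := hμ j
    omega
  · intro hcard
    by_contra hInd
    obtain ⟨j, hj⟩ := hrel B hB hBk.le hInd
    exact hj (hgen j _ Finset.inter_subset_right (hcard j))

theorem stmt13 (k : ℕ) (hk : 1 ≤ k) {J : Type} [Fintype J]
    (A : J → Finset (Fin (k - 1) → ℝ)) (μ : J → ℕ) (hμ : ∀ j, 1 ≤ μ j)
    (hsum : ∑ j, μ j ≤ k)
    (U : J → AffineSubspace ℝ (Fin (k - 1) → ℝ))
    (hdim : ∀ j, Module.finrank ℝ (U j).direction = μ j - 1)
    (hne : ∀ j, ((U j : Set (Fin (k - 1) → ℝ))).Nonempty)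
    (hAU : ∀ j, (A j : Set (Fin (k - 1) → ℝ)) ⊆ U j)
    (hdisj : ∀ i j, i ≠ j → (U i : Set (Fin (k - 1) → ℝ)) ∩ (U j) = ∅)
    (hgen : ∀ j, ∀ s ⊆ A j, s.card ≤ μ j → affIndep s)
    (hrel : ∀ s : Finset (Fin (k - 1) → ℝ), (↑s ⊆ ⋃ j, (A j : Set (Fin (k - 1) → ℝ))) →
      s.card ≤ k → ¬ affIndep s → ∃ j, ¬ affIndep (s ∩ A j))
    (B : Finset (Fin (k - 1) → ℝ))
    (hB : ↑B ⊆ ⋃ j, (A j : Set (Fin (k - 1) → ℝ))) (hBk : B.card = k) :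
    affIndep B ↔ ∀ j, (B ∩ A j).card ≤ μ j :=
  stmt13_general k A μ hμ U hdim hAU hgen hrel B hB hBk
end

section
/- Let Σ be a polyhedral subdivision of a convex polytope Q ⊆ ℝ^d whose interior dual graph (vertices = maximal cells, edges = pairs of maximal cells sharing a common facet that is interior to Q) is disconnected after removing one maximal cell v, and let T be the set of maximal cells of one connected component of this graph minus v. If every codimension-one interior face shared between a cell in T ∪ {v} and a cell outside T ∪ {v} is a facet of the cell v, then the union of the cells in T ∪ {v} is convex. -/
/-!
Perturb two points of `S = ⋃ C ∈ insert v T, C` to generic interior points `x`, `y`: the segment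
`[x, y]` then misses every intersection of two cells of codimension at least two. Where the
segment passes from a cell of `insert v T` to another cell, it does so through the relative
interior of a common facet, and such a facet lies in `v` by hypothesis. On the segment, a point
outside `S` is preceded and followed by such crossing points, so it lies in the convex cell `v`,
which is absurd. Hence `[x, y] ⊆ S`, and since `S` is closed and generic pairs are dense,
`S` is convex.
-/

open Set Module

section Affine

variable {E : Type*} [AddCommGroup E] [Module ℝ E]

theorem affineSpan_insert_ne_top {A : AffineSubspace ℝ E}
    (hA : finrank ℝ A.direction + 2 ≤ finrank ℝ E) (x : E) :
    affineSpan ℝ (insert x (A : Set E)) ≠ ⊤ := by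
  intro htop
  have := finrank_vectorSpan_insert_le A x
  rw [← direction_affineSpan, htop, AffineSubspace.direction_top, finrank_top] at this
  omega

theorem disjoint_segment_of_notMem_affineSpan_insert {A : AffineSubspace ℝ E} {x y : E}
    (hx : x ∉ A) (hy : y ∉ affineSpan ℝ (insert x (A : Set E))) :
    Disjoint (segment ℝ x y) A := by
  rw [Set.disjoint_left, segment_eq_image_lineMap]
  rintro _ ⟨t, -, rfl⟩ htA
  have ht : t ≠ 0 := by
    rintro rfl
    exact hx (by simpa using htA)
  apply hy
  simpa [inv_mul_cancel₀ ht] using AffineMap.lineMap_mem t⁻¹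
    (mem_affineSpan ℝ (mem_insert x _)) (mem_affineSpan ℝ (mem_insert_of_mem x htA))

end Affine

section Topological

variable {E : Type*} [AddCommGroup E] [Module ℝ E] [TopologicalSpace E]
  [IsTopologicalAddGroup E] [ContinuousSMul ℝ E]

theorem IsExtreme.subset_of_mem_interior {A B : Set E} (h : IsExtreme ℝ A B) {x : E}
    (hxB : x ∈ B) (hxA : x ∈ interior A) : A ⊆ B := by
  intro y hy
  have hx := AffineMap.lineMap_apply_one (k := ℝ) y x
  obtain ⟨t, ht1, ht⟩ := AffineMap.lineMap_continuous.tendsto' _ _ hx |>.eventually_mem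
    (mem_interior_iff_mem_nhds.1 hxA) |>.exists_gt
  refine h.left_mem_of_mem_openSegment hy ht hxB ?_
  nth_rw 1 [← AffineMap.lineMap_apply_zero (k := ℝ) y x, ← image_openSegment]
  exact ⟨1, Ioo_subset_openSegment ⟨zero_lt_one, ht1⟩, hx⟩

theorem eq_of_isExtreme_inter_of_interior_nonempty {C D : Set E}
    (hC : IsExtreme ℝ C (C ∩ D)) (hD : IsExtreme ℝ D (D ∩ C))
    (h : (interior (C ∩ D)).Nonempty) : C = D := by
  obtain ⟨x, hx⟩ := h
  have hxC : x ∈ interior C := interior_mono inter_subset_left hx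
  have hxD : x ∈ interior D := interior_mono inter_subset_right hx
  have hxCD : x ∈ C ∩ D := interior_subset hx
  exact subset_antisymm ((hC.subset_of_mem_interior hxCD hxC).trans inter_subset_right)
    ((hD.subset_of_mem_interior hxCD.symm hxD).trans inter_subset_right)

theorem isClosed_setOf_segment_subset {S : Set E} (hS : IsClosed S) :
    IsClosed {p : E × E | segment ℝ p.1 p.2 ⊆ S} := by
  have : {p : E × E | segment ℝ p.1 p.2 ⊆ S} =
      ⋂ t ∈ Icc (0 : ℝ) 1, (fun p : E × E => AffineMap.lineMap p.1 p.2 t) ⁻¹' S := by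
    ext p
    rw [mem_iInter₂, mem_ofPred_eq, segment_eq_image_lineMap, image_subset_iff]
    rfl
  rw [this]
  exact isClosed_biInter fun t _ => hS.preimage (by fun_prop)

/-- By connectedness, a point of the segment outside `S` lies between two points of `v`. -/
theorem segment_subset_of_inter_subset {S S' v : Set E} (hS : IsClosed S) (hS' : IsClosed S')
    (hv : Convex ℝ v) (hvS : v ⊆ S) {x y : E} (hx : x ∈ S) (hy : y ∈ S)
    (hcover : segment ℝ x y ⊆ S ∪ S') (hcross : segment ℝ x y ∩ S ∩ S' ⊆ v) :
    segment ℝ x y ⊆ S := by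
  intro z hz
  by_contra hzS
  have hzS' : z ∈ S' := (hcover hz).resolve_left hzS
  have crossing : ∀ a ∈ S, segment ℝ a z ⊆ segment ℝ x y → ∃ p ∈ segment ℝ a z, p ∈ v := by
    intro a ha hsub
    obtain ⟨p, hp, hpS, hpS'⟩ := isPreconnected_closed_iff.1 (convex_segment a z).isPreconnected
      S S' hS hS' (hsub.trans hcover) ⟨a, left_mem_segment ℝ a z, ha⟩
      ⟨z, right_mem_segment ℝ a z, hzS'⟩
    exact ⟨p, hp, hcross ⟨⟨hsub hp, hpS⟩, hpS'⟩⟩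
  obtain ⟨p, hp, hpv⟩ :=
    crossing x hx ((convex_segment x y).segment_subset (left_mem_segment ℝ x y) hz)
  obtain ⟨q, hq, hqv⟩ :=
    crossing y hy ((convex_segment x y).segment_subset (right_mem_segment ℝ x y) hz)
  have hpzy : Wbtw ℝ p z y := (mem_segment_iff_wbtw.1 hz).trans_left_right
    (mem_segment_iff_wbtw.1 hp)
  have hpzq : Wbtw ℝ p z q := (hpzy.symm.trans_left_right (mem_segment_iff_wbtw.1 hq)).symm
  exact hzS (hvS (hv.segment_subset hpv hqv (mem_segment_iff_wbtw.2 hpzq)))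

theorem convex_of_dense_segment_subset {S : Set E} (hS : IsClosed S)
    (hSi : S ⊆ closure (interior S)) {G : Set (E × E)} (hG : Dense G)
    (h : ∀ p ∈ G, p.1 ∈ interior S → p.2 ∈ interior S → segment ℝ p.1 p.2 ⊆ S) :
    Convex ℝ S := by
  refine convex_iff_segment_subset.2 fun x hx y hy => ?_
  have hW : IsOpen (interior S ×ˢ interior S) := isOpen_interior.prod isOpen_interior
  have hxy : (x, y) ∈ closure (interior S ×ˢ interior S) := by
    rw [closure_prod_eq]
    exact ⟨hSi hx, hSi hy⟩
  have hWG : interior S ×ˢ interior S ∩ G ⊆ {p : E × E | segment ℝ p.1 p.2 ⊆ S} :=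
    fun p ⟨⟨hp1, hp2⟩, hpG⟩ => h p hpG hp1 hp2
  exact (isClosed_setOf_segment_subset hS).closure_subset_iff.2 hWG
    (closure_minimal (hG.open_subset_closure_inter hW) isClosed_closure hxy)

end Topological

section FiniteDimensional

variable {E : Type*} [NormedAddCommGroup E] [NormedSpace ℝ E] [FiniteDimensional ℝ E]

theorem Convex.interior_nonempty_iff_finrank_direction_eq {s : Set E} (hs : Convex ℝ s)
    (hne : s.Nonempty) :
    (interior s).Nonempty ↔ finrank ℝ (affineSpan ℝ s).direction = finrank ℝ E := by
  rw [hs.interior_nonempty_iff_affineSpan_eq_top,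
    ← AffineSubspace.direction_eq_top_iff_of_nonempty ((affineSpan_nonempty ℝ).2 hne),
    Submodule.eq_top_iff_finrank_eq]

theorem Convex.subset_closure_interior_of_finrank_direction_eq {s : Set E} (hs : Convex ℝ s)
    (h : finrank ℝ (affineSpan ℝ s).direction = finrank ℝ E) :
    s ⊆ closure (interior s) := by
  intro x hx
  rw [hs.closure_interior_eq_closure_of_nonempty_interior
    ((hs.interior_nonempty_iff_finrank_direction_eq ⟨x, hx⟩).2 h)]
  exact subset_closure hx

theorem finrank_direction_affineSpan_inter_lt {C D : Set E} (hC : Convex ℝ C)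
    (hD : Convex ℝ D) (hCD : IsExtreme ℝ C (C ∩ D)) (hDC : IsExtreme ℝ D (D ∩ C)) (hne : C ≠ D)
    (hinter : (C ∩ D).Nonempty) :
    finrank ℝ (affineSpan ℝ (C ∩ D)).direction < finrank ℝ E :=
  (Submodule.finrank_le _).lt_of_ne fun h => hne <| eq_of_isExtreme_inter_of_interior_nonempty
    hCD hDC (((hC.inter hD).interior_nonempty_iff_finrank_direction_eq hinter).2 h)

theorem dense_biInter_compl_affineSubspace {ι : Type*} {s : Set ι} (hs : s.Finite)
    (A : ι → AffineSubspace ℝ E) (hA : ∀ i ∈ s, A i ≠ ⊤) :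
    Dense (⋂ i ∈ s, (A i : Set E)ᶜ) := by
  refine dense_biInter_of_isOpen
    (fun i _ => (AffineSubspace.closed_of_finiteDimensional (A i)).isOpen_compl)
    hs.countable fun i hi => ?_
  rw [← interior_eq_empty_iff_dense_compl, ← not_nonempty_iff_eq_empty,
    (A i).convex.interior_nonempty_iff_affineSpan_eq_top, AffineSubspace.affineSpan_coe]
  exact hA i hi

/-- Choose `x` off each `A`, then `y` off each affine span of `A` and `x`. -/
theorem dense_setOf_disjoint_segment {𝒜 : Set (AffineSubspace ℝ E)} (h𝒜 : 𝒜.Finite)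
    (hcodim : ∀ A ∈ 𝒜, finrank ℝ A.direction + 2 ≤ finrank ℝ E) :
    Dense {p : E × E | ∀ A ∈ 𝒜, Disjoint (segment ℝ p.1 p.2) A} := by
  refine dense_iff_inter_open.2 fun U hU ⟨a, haU⟩ => ?_
  obtain ⟨U₁, U₂, hU₁, hU₂, ha₁, ha₂, hsub⟩ := isOpen_prod_iff.1 hU a.1 a.2 haU
  have hne_top : ∀ A ∈ 𝒜, A ≠ ⊤ := fun A hA htop => by
    have := hcodim A hA
    rw [htop, AffineSubspace.direction_top, finrank_top] at this
    omega
  obtain ⟨x, hxU, hx⟩ := (dense_biInter_compl_affineSubspace h𝒜 id hne_top).inter_open_nonempty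
    U₁ hU₁ ⟨_, ha₁⟩
  obtain ⟨y, hyU, hy⟩ := (dense_biInter_compl_affineSubspace h𝒜
    (fun A => affineSpan ℝ (insert x (A : Set E)))
    fun A hA => affineSpan_insert_ne_top (hcodim A hA) x).inter_open_nonempty U₂ hU₂ ⟨_, ha₂⟩
  exact ⟨(x, y), hsub ⟨hxU, hyU⟩, fun A hA => disjoint_segment_of_notMem_affineSpan_insert
    (mem_iInter₂.1 hx A hA) (mem_iInter₂.1 hy A hA)⟩

theorem convex_biUnion_of_interior_facets_subset {Q v : Set E} {Cells I : Set (Set E)}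
    (hQ : Convex ℝ Q) (hfin : Cells.Finite) (hconv : ∀ C ∈ Cells, Convex ℝ C)
    (hclosed : ∀ C ∈ Cells, IsClosed C) (hcover : ⋃ C ∈ Cells, C = Q)
    (hfaces : ∀ C ∈ Cells, ∀ D ∈ Cells, IsExtreme ℝ C (C ∩ D))
    (hfull : ∀ C ∈ Cells, finrank ℝ (affineSpan ℝ C).direction = finrank ℝ E)
    (hI : I ⊆ Cells) (hv : v ∈ I)
    (hfacet : ∀ C ∈ I, ∀ D ∈ Cells, D ∉ I →
      finrank ℝ (affineSpan ℝ (C ∩ D)).direction = finrank ℝ E - 1 →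
      ¬ C ∩ D ⊆ frontier Q → C ∩ D ⊆ v) :
    Convex ℝ (⋃ C ∈ I, C) := by
  set S := ⋃ C ∈ I, C
  set S' := ⋃ C ∈ Cells \ I, C
  have hSS' : S ∪ S' = Q := by rw [← hcover, ← biUnion_union, union_sdiff_cancel hI]
  have hS : IsClosed S := (hfin.subset hI).isClosed_biUnion fun C hC => hclosed C (hI hC)
  have hS' : IsClosed S' := (hfin.subset sdiff_subset).isClosed_biUnion fun C hC => hclosed C hC.1
  have hSi : S ⊆ closure (interior S) := iUnion₂_subset fun C hC =>
    ((hconv C (hI hC)).subset_closure_interior_of_finrank_direction_eq (hfull C (hI hC))).trans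
      (closure_mono (interior_mono (subset_biUnion_of_mem (u := id) hC)))
  set 𝒜 := (fun p : Set E × Set E => affineSpan ℝ (p.1 ∩ p.2)) ''
    {p | p ∈ Cells ×ˢ Cells ∧ finrank ℝ (affineSpan ℝ (p.1 ∩ p.2)).direction + 2 ≤ finrank ℝ E}
  have h𝒜 : 𝒜.Finite := ((hfin.prod hfin).subset fun p hp => hp.1).image _
  have hcodim : ∀ A ∈ 𝒜, finrank ℝ A.direction + 2 ≤ finrank ℝ E := by
    rintro _ ⟨p, hp, rfl⟩
    exact hp.2
  refine convex_of_dense_segment_subset hS hSi (dense_setOf_disjoint_segment h𝒜 hcodim) ?_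
  rintro ⟨x, y⟩ hxy hx hy
  have hseg : segment ℝ x y ⊆ interior Q := hQ.interior.segment_subset
    (interior_mono (hSS' ▸ subset_union_left) hx) (interior_mono (hSS' ▸ subset_union_left) hy)
  refine segment_subset_of_inter_subset hS hS' (hconv v (hI hv)) (subset_biUnion_of_mem (u := id)
    hv) (interior_subset hx) (interior_subset hy) (hSS' ▸ hseg.trans interior_subset) ?_
  rintro u ⟨⟨hu, huS⟩, huS'⟩
  obtain ⟨C, hC, huC⟩ := mem_iUnion₂.1 huS
  obtain ⟨D, ⟨hD, hDI⟩, huD⟩ := mem_iUnion₂.1 huS'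
  have hlt := finrank_direction_affineSpan_inter_lt (hconv C (hI hC)) (hconv D hD)
    (hfaces C (hI hC) D hD) (hfaces D hD C (hI hC)) (ne_of_mem_of_not_mem hC hDI) ⟨u, huC, huD⟩
  have hnot_codim_two : ¬ finrank ℝ (affineSpan ℝ (C ∩ D)).direction + 2 ≤ finrank ℝ E :=
    fun h => disjoint_left.1 (hxy _ ⟨(C, D), ⟨⟨hI hC, hD⟩, h⟩, rfl⟩) hu
      (subset_affineSpan ℝ _ ⟨huC, huD⟩)
  have hinterior : ¬ C ∩ D ⊆ frontier Q := fun h =>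
    disjoint_left.1 disjoint_interior_frontier (hseg hu) (h ⟨huC, huD⟩)
  exact hfacet C hC D hD hDI (by omega) hinterior ⟨huC, huD⟩

end FiniteDimensional

theorem stmt17_general (d : ℕ) (Q : Set (Fin d → ℝ))
    (hQpoly : ∃ VQ : Finset (Fin d → ℝ), Q = convexHull ℝ (VQ : Set (Fin d → ℝ)))
    (Cells : Set (Set (Fin d → ℝ))) (hfin : Cells.Finite)
    (hpoly : ∀ C ∈ Cells, ∃ F : Finset (Fin d → ℝ), C = convexHull ℝ (F : Set (Fin d → ℝ)))
    (hcover : ⋃ C ∈ Cells, C = Q)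
    (hfaces : ∀ C ∈ Cells, ∀ D ∈ Cells, IsExtreme ℝ C (C ∩ D))
    (hfull : ∀ C ∈ Cells, Module.finrank ℝ (affineSpan ℝ C).direction = d)
    (v : Set (Fin d → ℝ)) (hv : v ∈ Cells)
    (T : Set (Set (Fin d → ℝ))) (hT : T ⊆ Cells)
    (hfacet : ∀ C ∈ insert v T, ∀ D ∈ Cells, D ∉ insert v T →
      Module.finrank ℝ (affineSpan ℝ (C ∩ D)).direction = d - 1 →
      ¬ (C ∩ D ⊆ frontier Q) →
      C ∩ D ⊆ v ∧ IsExtreme ℝ v (C ∩ D)) :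
    Convex ℝ (⋃ C ∈ insert v T, C) := by
  have hconv : ∀ C ∈ Cells, Convex ℝ C := fun C hC => by
    obtain ⟨F, rfl⟩ := hpoly C hC
    exact convex_convexHull ℝ _
  have hclosed : ∀ C ∈ Cells, IsClosed C := fun C hC => by
    obtain ⟨F, rfl⟩ := hpoly C hC
    exact F.finite_toSet.isClosed_convexHull ℝ
  have hQ : Convex ℝ Q := by
    obtain ⟨VQ, rfl⟩ := hQpoly
    exact convex_convexHull ℝ _
  have hdim : finrank ℝ (Fin d → ℝ) = d := finrank_fin_fun ℝ
  refine convex_biUnion_of_interior_facets_subset hQ hfin hconv hclosed hcover hfaces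
    (fun C hC => (hfull C hC).trans hdim.symm) (insert_subset hv hT) (mem_insert v T) ?_
  intro C hC D hD hDI hrank hinterior
  exact (hfacet C hC D hD hDI (by rwa [hdim] at hrank) hinterior).1

theorem stmt17 (d : ℕ) (Q : Set (Fin d → ℝ))
    (hQpoly : ∃ VQ : Finset (Fin d → ℝ), Q = convexHull ℝ (VQ : Set (Fin d → ℝ)))
    (Cells : Set (Set (Fin d → ℝ))) (hfin : Cells.Finite)
    (hpoly : ∀ C ∈ Cells, ∃ F : Finset (Fin d → ℝ), C = convexHull ℝ (F : Set (Fin d → ℝ)))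
    (hcover : ⋃ C ∈ Cells, C = Q)
    (hfaces : ∀ C ∈ Cells, ∀ D ∈ Cells, IsExtreme ℝ C (C ∩ D))
    (hfull : ∀ C ∈ Cells, Module.finrank ℝ (affineSpan ℝ C).direction = d)
    (Adj : Set (Fin d → ℝ) → Set (Fin d → ℝ) → Prop)
    (hAdj : ∀ C D, Adj C D ↔ C ∈ Cells ∧ D ∈ Cells ∧ C ≠ D ∧
      Module.finrank ℝ (affineSpan ℝ (C ∩ D)).direction = d - 1 ∧
      ¬ (C ∩ D ⊆ frontier Q))
    (v : Set (Fin d → ℝ)) (hv : v ∈ Cells)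
    (T : Set (Set (Fin d → ℝ))) (hT : T ⊆ Cells) (hvT : v ∉ T)
    (hcomp : ∀ C ∈ T, ∀ D ∈ Cells, D ∉ T → D ≠ v → ¬ Adj C D)
    (hfacet : ∀ C ∈ insert v T, ∀ D ∈ Cells, D ∉ insert v T →
      Module.finrank ℝ (affineSpan ℝ (C ∩ D)).direction = d - 1 →
      ¬ (C ∩ D ⊆ frontier Q) →
      C ∩ D ⊆ v ∧ IsExtreme ℝ v (C ∩ D)) :
    Convex ℝ (⋃ C ∈ insert v T, C) :=
  stmt17_general d Q hQpoly Cells hfin hpoly hcover hfaces hfull v hv T hT hfacet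
end
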